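/- Define v_n = (1/2)·(1/2)_{n−1}(1/2)_n/(n!)² and u_n = (6/5)(1/2)_{n−1}/(n+2)! + (2/5)(3/4)_n/(n+2)! for n ≥ 1, where (a)_n is the Pochhammer symbol. Then the sequence (v_n/u_n)_{n≥1} is increasing; equivalently, (v_{n+1}/v_n)·u_n − u_{n+1} ≥ 0 for all n ≥ 1, with strict inequality for n ≥ 3. -/
import Mathlib


/-- Rising factorial (Pochhammer symbol) of a real number. -/
noncomputable def poch (a : ℝ) (n : ℕ) : ℝ := ∏ i ∈ Finset.range n, (a + i)

/-- Maclaurin coefficients of `1 - (2/π) E(r)` in `r²`. -/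
noncomputable def v (n : ℕ) : ℝ :=
  1 / 2 * poch (1 / 2) (n - 1) * poch (1 / 2) n / ((n.factorial : ℝ)) ^ 2

/-- Maclaurin coefficients of `1 - S_{5/2,2}(1, √(1-r²))` in `r²`. -/
noncomputable def u (n : ℕ) : ℝ :=
  6 / 5 * poch (1 / 2) (n - 1) / ((n + 2).factorial : ℝ) +
    2 / 5 * poch (3 / 4) n / ((n + 2).factorial : ℝ)

lemma poch_pos {a : ℝ} (ha : 0 < a) (n : ℕ) : 0 < poch a n := by
  refine Finset.prod_pos fun i _ => ?_
  positivity

lemma poch_succ (a : ℝ) (n : ℕ) : poch a (n + 1) = poch a n * (a + n) := by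
  simp [poch, Finset.prod_range_succ]

/-- The key polynomial combination. -/
noncomputable def Kpoly (m : ℕ) : ℝ :=
  6 * poch (1 / 2) m * (2 * m + 1) * (3 * m + 4) +
    2 * poch (3 / 4) (m + 1) * ((m : ℝ) ^ 2 - 9 * m - 16)

lemma Kpoly_nonneg (m : ℕ) : 0 ≤ Kpoly m := by
  rcases le_or_gt m 10 with h | h
  · interval_cases m <;>
      norm_num [Kpoly, poch, Finset.prod_range_succ]
  · have hA := poch_pos (by norm_num : (0:ℝ) < 1 / 2) m
    have hB := poch_pos (by norm_num : (0:ℝ) < 3 / 4) (m + 1)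
    have hm : (11:ℝ) ≤ (m : ℝ) := by exact_mod_cast h
    have h2 : (0:ℝ) ≤ (m : ℝ) ^ 2 - 9 * m - 16 := by nlinarith
    have h3 : (0:ℝ) ≤ (2 * (m:ℝ) + 1) * (3 * m + 4) := by positivity
    unfold Kpoly
    nlinarith [mul_nonneg hB.le h2, mul_nonneg hA.le h3]

lemma Kpoly_pos {m : ℕ} (hm2 : 2 ≤ m) : 0 < Kpoly m := by
  rcases le_or_gt m 10 with h | h
  · interval_cases m <;>
      norm_num [Kpoly, poch, Finset.prod_range_succ]
  · have hA := poch_pos (by norm_num : (0:ℝ) < 1 / 2) m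
    have hB := poch_pos (by norm_num : (0:ℝ) < 3 / 4) (m + 1)
    have hm : (11:ℝ) ≤ (m : ℝ) := by exact_mod_cast h
    have h2 : (0:ℝ) ≤ (m : ℝ) ^ 2 - 9 * m - 16 := by nlinarith
    have h3 : (0:ℝ) < (2 * (m:ℝ) + 1) * (3 * m + 4) := by positivity
    unfold Kpoly
    nlinarith [mul_nonneg hB.le h2, mul_pos hA h3]

lemma diff_eq (m : ℕ) :
    v (m + 2) * u (m + 1) - v (m + 1) * u (m + 2) =
      (poch (1 / 2) m) ^ 2 * (1 / 2 + (m : ℝ)) /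
        (40 * ((m + 1).factorial : ℝ) ^ 2 * ((m + 3).factorial : ℝ) * ((m : ℝ) + 2) ^ 2 *
          ((m : ℝ) + 4)) * Kpoly m := by
  have e1 : (m + 2) - 1 = m + 1 := rfl
  have e2 : (m + 1) - 1 = m := rfl
  have f1 : ((m + 2).factorial : ℝ) = ((m : ℝ) + 2) * ((m + 1).factorial : ℝ) := by
    rw [show m + 2 = (m + 1) + 1 from rfl, Nat.factorial_succ]; push_cast; ring
  have f2 : ((m + 3).factorial : ℝ) = ((m : ℝ) + 3) * ((m + 2).factorial : ℝ) := by
    rw [show m + 3 = (m + 2) + 1 from rfl, Nat.factorial_succ]; push_cast; ring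
  have f3 : ((m + 4).factorial : ℝ) = ((m : ℝ) + 4) * ((m + 3).factorial : ℝ) := by
    rw [show m + 4 = (m + 3) + 1 from rfl, Nat.factorial_succ]; push_cast; ring
  have hf1 : ((m + 1).factorial : ℝ) ≠ 0 := by positivity
  have hf3 : ((m + 3).factorial : ℝ) ≠ 0 := by positivity
  have hm2 : ((m : ℝ) + 2) ≠ 0 := by positivity
  have hm3 : ((m : ℝ) + 3) ≠ 0 := by positivity
  have hm4 : ((m : ℝ) + 4) ≠ 0 := by positivity
  simp only [v, u, Kpoly, e1, e2,
    show m + 2 = (m + 1) + 1 from rfl, poch_succ, f1, f2, f3]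
  push_cast
  field_simp
  ring

lemma key_nonneg (m : ℕ) : 0 ≤ v (m + 2) * u (m + 1) - v (m + 1) * u (m + 2) := by
  rw [diff_eq]
  have hA := poch_pos (by norm_num : (0:ℝ) < 1 / 2) m
  have hC : (0:ℝ) ≤ (poch (1 / 2) m) ^ 2 * (1 / 2 + (m : ℝ)) /
      (40 * ((m + 1).factorial : ℝ) ^ 2 * ((m + 3).factorial : ℝ) * ((m : ℝ) + 2) ^ 2 *
        ((m : ℝ) + 4)) := by positivity
  exact mul_nonneg hC (Kpoly_nonneg m)

lemma key_pos {m : ℕ} (hm : 2 ≤ m) :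
    0 < v (m + 2) * u (m + 1) - v (m + 1) * u (m + 2) := by
  rw [diff_eq]
  have hA := poch_pos (by norm_num : (0:ℝ) < 1 / 2) m
  have hC : (0:ℝ) < (poch (1 / 2) m) ^ 2 * (1 / 2 + (m : ℝ)) /
      (40 * ((m + 1).factorial : ℝ) ^ 2 * ((m + 3).factorial : ℝ) * ((m : ℝ) + 2) ^ 2 *
        ((m : ℝ) + 4)) := by positivity
  exact mul_pos hC (Kpoly_pos hm)

lemma v_pos (m : ℕ) : 0 < v (m + 1) := by
  have e2 : (m + 1) - 1 = m := rfl
  have h1 := poch_pos (by norm_num : (0:ℝ) < 1 / 2) m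
  have h2 := poch_pos (by norm_num : (0:ℝ) < 1 / 2) (m + 1)
  have hf : (0:ℝ) < ((m + 1).factorial : ℝ) := by positivity
  rw [v, e2]
  positivity

lemma u_pos (m : ℕ) : 0 < u (m + 1) := by
  have e2 : (m + 1) - 1 = m := rfl
  have h1 := poch_pos (by norm_num : (0:ℝ) < 1 / 2) m
  have h2 := poch_pos (by norm_num : (0:ℝ) < 3 / 4) (m + 1)
  have hf : (0:ℝ) < ((m + 1 + 2).factorial : ℝ) := by positivity
  rw [u, e2]
  positivity

theorem vu_ratio_increasing :
    (∀ n : ℕ, 1 ≤ n → v n / u n ≤ v (n + 1) / u (n + 1)) ∧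
    (∀ n : ℕ, 1 ≤ n → 0 ≤ v (n + 1) / v n * u n - u (n + 1)) ∧
    (∀ n : ℕ, 3 ≤ n → 0 < v (n + 1) / v n * u n - u (n + 1)) := by
  refine ⟨?_, ?_, ?_⟩
  · rintro n hn
    obtain ⟨m, rfl⟩ : ∃ m, n = m + 1 := ⟨n - 1, by omega⟩
    have h1 := u_pos m
    have h2 := u_pos (m + 1)
    rw [div_le_div_iff₀ h1 h2]
    have := key_nonneg m
    nlinarith
  · rintro n hn
    obtain ⟨m, rfl⟩ : ∃ m, n = m + 1 := ⟨n - 1, by omega⟩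
    have hv := v_pos m
    have hD := key_nonneg m
    have heq : v (m + 1 + 1) / v (m + 1) * u (m + 1) - u (m + 1 + 1) =
        (v (m + 2) * u (m + 1) - v (m + 1) * u (m + 2)) / v (m + 1) := by
      field_simp
    rw [heq]
    exact div_nonneg hD hv.le
  · rintro n hn
    obtain ⟨m, rfl⟩ : ∃ m, n = m + 3 := ⟨n - 3, by omega⟩
    have hv := v_pos (m + 2)
    have hD := key_pos (show 2 ≤ m + 2 by omega)
    have heq : v (m + 3 + 1) / v (m + 3) * u (m + 3) - u (m + 3 + 1) =
        (v (m + 2 + 2) * u (m + 2 + 1) - v (m + 2 + 1) * u (m + 2 + 2)) / v (m + 2 + 1) := by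
      have : m + 3 = m + 2 + 1 := rfl
      rw [this]
      have hv' := v_pos (m + 2)
      field_simp
    rw [heq]
    exact div_pos hD (v_pos (m + 2))
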